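/- Grigorchuk's group G contains no nonabelian free subgroup: there do not exist elements x, y of G such that the homomorphism from the free group on two generators to G sending the two generators to x and y is injective. -/
import Mathlib


/-- The Grigorchuk generator `a`: flips the first bit of a nonempty binary word. -/
def grigA : List Bool → List Bool
  | [] => []
  | false :: w => true :: w
  | true :: w => false :: w

mutual
  /-- The Grigorchuk generator `b`. -/
  def grigB : List Bool → List Bool
    | [] => []
    | false :: w => false :: grigA w
    | true :: w => true :: grigC w
  /-- The Grigorchuk generator `c`. -/
  def grigC : List Bool → List Bool
    | [] => []
    | false :: w => false :: grigA w
    | true :: w => true :: grigD w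
  /-- The Grigorchuk generator `d`. -/
  def grigD : List Bool → List Bool
    | [] => []
    | false :: w => false :: w
    | true :: w => true :: grigB w
end

theorem grigA_involutive : Function.Involutive grigA := by
  intro w
  match w with
  | [] => rfl
  | false :: w => rfl
  | true :: w => rfl

theorem grigBCD_involutive : ∀ w : List Bool,
    grigB (grigB w) = w ∧ grigC (grigC w) = w ∧ grigD (grigD w) = w
  | [] => ⟨rfl, rfl, rfl⟩
  | false :: w => by
      simp [grigB, grigC, grigD, grigA_involutive w]
  | true :: w => by
      obtain ⟨hb, hc, hd⟩ := grigBCD_involutive w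
      simp [grigB, grigC, grigD, hb, hc, hd]

theorem grigB_involutive : Function.Involutive grigB :=
  fun w => (grigBCD_involutive w).1

theorem grigC_involutive : Function.Involutive grigC :=
  fun w => (grigBCD_involutive w).2.1

theorem grigD_involutive : Function.Involutive grigD :=
  fun w => (grigBCD_involutive w).2.2

/-- The Grigorchuk generator `a` as a permutation of the set of binary words. -/
def grigPermA : Equiv.Perm (List Bool) := grigA_involutive.toPerm grigA

/-- The Grigorchuk generator `b` as a permutation of the set of binary words. -/
def grigPermB : Equiv.Perm (List Bool) := grigB_involutive.toPerm grigB

/-- The Grigorchuk generator `c` as a permutation of the set of binary words. -/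
def grigPermC : Equiv.Perm (List Bool) := grigC_involutive.toPerm grigC

/-- The Grigorchuk generator `d` as a permutation of the set of binary words. -/
def grigPermD : Equiv.Perm (List Bool) := grigD_involutive.toPerm grigD

/-- Grigorchuk's group: the subgroup of the permutation group of the set of binary
words generated by the four permutations `a, b, c, d`. -/
def grigorchukGroup : Subgroup (Equiv.Perm (List Bool)) :=
  Subgroup.closure {grigPermA, grigPermB, grigPermC, grigPermD}

namespace GrigAux

/-- The alphabet of the four Grigorchuk generators. -/
inductive L4 | A | B | C | D
deriving DecidableEq

open L4

/-- Interpretation of a letter as a function on binary words. -/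
def f : L4 → List Bool → List Bool
  | A => grigA
  | B => grigB
  | C => grigC
  | D => grigD

def isA : L4 → Bool
  | A => true
  | _ => false

/-- Evaluate a word over the alphabet, applying the leftmost letter first. -/
def eval : List L4 → List Bool → List Bool
  | [], w => w
  | X :: L, w => eval L (f X w)

/-- Parity of the number of `A`'s in a word. -/
def pL : List L4 → Bool
  | [] => false
  | A :: L => !(pL L)
  | _ :: L => pL L

/-- The section (first-level state decomposition) of a word at side `x`. -/
def sec : List L4 → Bool → List L4
  | [], _ => []
  | A :: L, x => sec L (!x)
  | B :: L, x => (if x then C else A) :: sec L x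
  | C :: L, x => (if x then D else A) :: sec L x
  | D :: L, x => if x then B :: sec L x else sec L x

theorem f_invol : ∀ (X : L4) (w : List Bool), f X (f X w) = w := by
  intro X w
  cases X
  · exact grigA_involutive w
  · exact grigB_involutive w
  · exact grigC_involutive w
  · exact grigD_involutive w

theorem bcd_mul : ∀ w : List Bool,
    grigC (grigB w) = grigD w ∧ grigD (grigC w) = grigB w ∧ grigB (grigD w) = grigC w ∧
    grigB (grigC w) = grigD w ∧ grigC (grigD w) = grigB w ∧ grigD (grigB w) = grigC w
  | [] => ⟨rfl, rfl, rfl, rfl, rfl, rfl⟩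
  | false :: w => by
      simp [grigB, grigC, grigD, grigA_involutive w]
  | true :: w => by
      obtain ⟨h1, h2, h3, h4, h5, h6⟩ := bcd_mul w
      simp [grigB, grigC, grigD, h1, h2, h3, h4, h5, h6]

theorem eval_append : ∀ (L M : List L4) (w : List Bool),
    eval (L ++ M) w = eval M (eval L w)
  | [], _, _ => rfl
  | X :: L, M, w => by simp [eval, eval_append L M]

theorem eval_nil_word : ∀ L : List L4, eval L [] = []
  | [] => rfl
  | X :: L => by
      have : f X [] = [] := by cases X <;> rfl
      simp [eval, this, eval_nil_word L]

theorem eval_cons_decomp : ∀ (L : List L4) (x : Bool) (w : List Bool),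
    eval L (x :: w) = (xor x (pL L)) :: eval (sec L x) w
  | [], x, w => by simp [eval, pL, sec]
  | A :: L, x, w => by
      cases x <;>
        simp [eval, f, grigA, pL, sec, eval_cons_decomp L] <;>
        cases pL L <;> rfl
  | B :: L, x, w => by
      cases x <;> simp [eval, f, grigB, pL, sec, eval_cons_decomp L]
  | C :: L, x, w => by
      cases x <;> simp [eval, f, grigC, pL, sec, eval_cons_decomp L]
  | D :: L, x, w => by
      cases x <;> simp [eval, f, grigD, pL, sec, eval_cons_decomp L]

theorem pL_append : ∀ (L M : List L4), pL (L ++ M) = xor (pL L) (pL M)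
  | [], M => by simp [pL]
  | X :: L, M => by
      cases X <;> simp [pL, pL_append L M] <;> cases pL L <;> cases pL M <;> rfl

theorem sec_append : ∀ (L M : List L4) (x : Bool),
    sec (L ++ M) x = sec L x ++ sec M (xor x (pL L))
  | [], M, x => by simp [sec, pL]
  | X :: L, M, x => by
      cases X <;> cases x <;>
        simp [sec, pL, sec_append L M] <;> cases pL L <;> rfl

/-- Number of non-`A` letters. -/
def nA (L : List L4) : ℕ := L.countP (fun X => !(isA X))

theorem len_sec_le : ∀ (L : List L4) (x : Bool), (sec L x).length ≤ nA L
  | [], x => by simp [sec, nA]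
  | X :: L, x => by
      cases X <;> cases x <;>
        simp [sec, nA, isA, List.countP_cons] <;>
        first
          | exact len_sec_le L _
          | exact Nat.succ_le_succ (len_sec_le L _)
          | exact Nat.le_succ_of_le (len_sec_le L _)

theorem nA_cons (X : L4) (L : List L4) :
    nA (X :: L) = nA L + (if isA X then 0 else 1) := by
  cases X <;> simp [nA, List.countP_cons, isA]

theorem sum_len_sec : ∀ L : List L4,
    (sec L false).length + (sec L true).length + L.count D = 2 * nA L
  | [] => by simp [sec, nA]
  | X :: L => by
      have h := sum_len_sec L
      cases X <;>
        simp [sec, nA_cons, isA, List.count_cons] <;> omega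

theorem mem_D_sec : ∀ L : List L4, C ∈ L → D ∈ sec L false ∨ D ∈ sec L true
  | [], h => by simp at h
  | X :: L, h => by
      cases X
      · rcases mem_D_sec L (by simpa using h) with h' | h'
        · right; simpa [sec] using h'
        · left; simpa [sec] using h'
      · rcases mem_D_sec L (by simpa using h) with h' | h'
        · left; simpa [sec] using h'
        · right; simpa [sec] using h'
      · right; simp [sec]
      · rcases mem_D_sec L (by simpa using h) with h' | h'
        · left; simpa [sec] using h'
        · right; simpa [sec] using h'

theorem mem_C_sec : ∀ L : List L4, B ∈ L → C ∈ sec L false ∨ C ∈ sec L true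
  | [], h => by simp at h
  | X :: L, h => by
      cases X
      · rcases mem_C_sec L (by simpa using h) with h' | h'
        · right; simpa [sec] using h'
        · left; simpa [sec] using h'
      · right; simp [sec]
      · rcases mem_C_sec L (by simpa using h) with h' | h'
        · left; simpa [sec] using h'
        · right; simpa [sec] using h'
      · rcases mem_C_sec L (by simpa using h) with h' | h'
        · left; simpa [sec] using h'
        · right; simpa [sec] using h'

end GrigAux

namespace GrigAux
open L4

/-- A word has finite order (as a transformation of binary words). -/
def Ord (L : List L4) : Prop := ∃ n : ℕ, 0 < n ∧ ∀ w, (eval L)^[n] w = w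

theorem ord_nil : Ord [] := ⟨1, Nat.one_pos, fun w => rfl⟩

theorem ord_congr {L L' : List L4} (h : ∀ w, eval L w = eval L' w) (h' : Ord L') : Ord L := by
  have he : eval L = eval L' := funext h
  obtain ⟨n, hn, hw⟩ := h'
  exact ⟨n, hn, by rw [he]; exact hw⟩

theorem ord_single (X : L4) : Ord [X] := by
  refine ⟨2, by norm_num, fun w => ?_⟩
  show eval [X] (eval [X] w) = w
  show f X (f X w) = w
  exact f_invol X w

theorem ord_sq {L : List L4} (h : Ord (L ++ L)) : Ord L := by
  obtain ⟨n, hn, hw⟩ := h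
  have key : ∀ (m : ℕ) (w : List Bool), (eval (L ++ L))^[m] w = (eval L)^[2 * m] w := by
    intro m
    induction m with
    | zero => intro w; rfl
    | succ m ih =>
        intro w
        rw [Function.iterate_succ_apply, ih]
        have : 2 * (m + 1) = (2 * m) + 1 + 1 := by ring
        rw [this, Function.iterate_succ_apply, Function.iterate_succ_apply, eval_append]
  exact ⟨2 * n, by omega, fun w => by rw [← key n w]; exact hw w⟩

theorem ord_rot {M : List L4} {X : L4} (h : Ord (M ++ [X])) : Ord (X :: M) := by
  obtain ⟨n, hn, hw⟩ := h
  have hev : ∀ w, eval (M ++ [X]) w = f X (eval M w) := by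
    intro w; rw [eval_append]; rfl
  have key : ∀ (m : ℕ) (w : List Bool),
      f X ((eval (X :: M))^[m] w) = (eval (M ++ [X]))^[m] (f X w) := by
    intro m
    induction m with
    | zero => intro w; rfl
    | succ m ih =>
        intro w
        rw [Function.iterate_succ_apply, Function.iterate_succ_apply, ih]
        congr 1
        rw [hev]
        rfl
  refine ⟨n, hn, fun w => ?_⟩
  have h1 : f X ((eval (X :: M))^[n] w) = f X w := by rw [key, hw]
  have h2 := congrArg (f X) h1
  rwa [f_invol, f_invol] at h2

theorem iterate_fix {F : List Bool → List Bool} {k : ℕ} (hk : ∀ w, F^[k] w = w) :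
    ∀ (m : ℕ) (w : List Bool), F^[k * m] w = w := by
  intro m
  induction m with
  | zero => intro w; rfl
  | succ m ih =>
      intro w
      have : k * (m + 1) = k * m + k := by ring
      rw [this, Function.iterate_add_apply, ih, hk]

theorem ord_decomp {L : List L4} (hp : pL L = false)
    (h0 : Ord (sec L false)) (h1 : Ord (sec L true)) : Ord L := by
  obtain ⟨n0, hn0, hw0⟩ := h0
  obtain ⟨n1, hn1, hw1⟩ := h1
  have key : ∀ (m : ℕ) (x : Bool) (w : List Bool),
      (eval L)^[m] (x :: w) = x :: (eval (sec L x))^[m] w := by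
    intro m
    induction m with
    | zero => intro x w; rfl
    | succ m ih =>
        intro x w
        rw [Function.iterate_succ_apply, eval_cons_decomp, hp, Bool.xor_false, ih,
          Function.iterate_succ_apply]
  have keynil : ∀ m : ℕ, (eval L)^[m] ([] : List Bool) = [] := by
    intro m
    induction m with
    | zero => rfl
    | succ m ih => rw [Function.iterate_succ_apply, eval_nil_word, ih]
  refine ⟨n0 * n1, Nat.mul_pos hn0 hn1, fun w => ?_⟩
  match w with
  | [] => exact keynil _
  | x :: w =>
      rw [key]
      congr 1
      cases x
      · exact iterate_fix hw0 n1 w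
      · rw [Nat.mul_comm]; exact iterate_fix hw1 n0 w

/-- Reduction of a same-type adjacent pair of letters. -/
def prodRed : L4 → L4 → List L4
  | B, C => [D]
  | C, B => [D]
  | B, D => [C]
  | D, B => [C]
  | C, D => [B]
  | D, C => [B]
  | _, _ => []

theorem prodRed_len (X Y : L4) : (prodRed X Y).length ≤ 1 := by
  cases X <;> cases Y <;> simp [prodRed]

theorem prodRed_eval {X Y : L4} (h : isA X = isA Y) (w : List Bool) :
    eval (prodRed X Y) w = f Y (f X w) := by
  obtain ⟨h1, h2, h3, h4, h5, h6⟩ := bcd_mul w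
  cases X <;> cases Y <;> simp_all [isA, prodRed, eval, f] <;>
    first
      | exact (grigA_involutive w).symm
      | exact (grigB_involutive w).symm
      | exact (grigC_involutive w).symm
      | exact (grigD_involutive w).symm

/-- Adjacent letters of different type (exactly one is `A`). -/
def R (X Y : L4) : Prop := isA X ≠ isA Y

instance : DecidableRel R := fun X Y => by unfold R; infer_instance

theorem exists_shorter : ∀ L : List L4, ¬ List.Chain' R L →
    ∃ L' : List L4, L'.length < L.length ∧ ∀ w, eval L' w = eval L w
  | [], h => absurd List.isChain_nil h
  | [X], h => absurd (List.isChain_singleton X) h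
  | X :: Y :: M, h => by
      by_cases hR : R X Y
      · have hnc : ¬ List.Chain' R (Y :: M) := fun hc => h (List.isChain_cons_cons.mpr ⟨hR, hc⟩)
        obtain ⟨L', hlen, hev⟩ := exists_shorter (Y :: M) hnc
        refine ⟨X :: L', by simpa using hlen, fun w => ?_⟩
        show eval L' (f X w) = eval (Y :: M) (f X w)
        exact hev (f X w)
      · have hXY : isA X = isA Y := by
          by_contra hne
          exact hR hne
        refine ⟨prodRed X Y ++ M, ?_, fun w => ?_⟩
        · have := prodRed_len X Y
          simp only [List.length_append, List.length_cons]
          omega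
        · rw [eval_append, prodRed_eval hXY]
          rfl

/-- Penalty: 1 if the word starts with a non-`A` letter. -/
def hp : List L4 → ℕ
  | [] => 0
  | X :: _ => if isA X then 0 else 1

theorem hp_le (L : List L4) : hp L ≤ 1 := by
  cases L with
  | nil => simp [hp]
  | cons X M => simp [hp]; split <;> omega

theorem chain_count : ∀ L : List L4, List.Chain' R L → 2 * nA L ≤ L.length + hp L
  | [], _ => by simp [nA]
  | X :: M, hch => by
      obtain ⟨hhd, hch'⟩ := List.isChain_cons.mp hch
      have ih := chain_count M hch'
      have hhp := hp_le M
      cases hA : isA X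
      · -- X is not A
        have h2 : 2 * nA M ≤ M.length := by
          cases M with
          | nil => simp [nA]
          | cons Y M' =>
              have hR : R X Y := hhd Y rfl
              have hY : isA Y = true := by
                cases hisA : isA Y
                · exact absurd (hA.trans hisA.symm) hR
                · rfl
              simpa [hp, hY] using ih
        simp only [nA_cons, hA, hp, List.length_cons, Bool.false_eq_true, if_false]
        omega
      · simp only [nA_cons, hA, hp, List.length_cons, if_true]
        omega

end GrigAux

namespace GrigAux
open L4

/-- Rank of a word for the induction: detecting `d`, then `c`, then `b`. -/
def rk (L : List L4) : ℕ :=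
  if D ∈ L then 1 else if C ∈ L then 2 else if B ∈ L then 3 else 0

/-- The induction measure. -/
def mu (L : List L4) : ℕ := 4 * L.length + rk L

theorem rk_le (L : List L4) : rk L ≤ 3 := by
  unfold rk; split <;> [omega; split <;> [omega; split <;> omega]]

theorem rk_of_memD {L : List L4} (h : D ∈ L) : rk L = 1 := by
  simp [rk, h]

theorem rk_le_two_of_memC {L : List L4} (h : C ∈ L) : rk L ≤ 2 := by
  unfold rk; split
  · omega
  · simp [h]

theorem rk_congr {P Q : List L4} (h : ∀ Z, Z ∈ P ↔ Z ∈ Q) : rk P = rk Q := by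
  unfold rk
  simp only [h]

theorem goodCase (L : List L4) (IH : ∀ L', mu L' < mu L → Ord L')
    (hch : List.Chain' R L) (hhd : hp L = 0) : Ord L := by
  by_cases hL : L = []
  · rw [hL]; exact ord_nil
  have hlen1 : 1 ≤ L.length := List.length_pos_iff.mpr hL
  have hC1 : 2 * nA L ≤ L.length := by
    have := chain_count L hch
    omega
  have hnAlt : nA L < L.length := by omega
  by_cases hpL : pL L = false
  · refine ord_decomp hpL (IH _ ?_) (IH _ ?_) <;>
      · have h1 := len_sec_le L false
        have h2 := len_sec_le L true
        have h3 := rk_le (sec L false)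
        have h4 := rk_le (sec L true)
        have h5 := rk_le L
        unfold mu
        omega
  · have hpT : pL L = true := by
      cases hpl' : pL L
      · exact absurd hpl' hpL
      · rfl
    have hpM : pL (L ++ L) = false := by rw [pL_append, hpT]; rfl
    have hsecM : ∀ x, sec (L ++ L) x = sec L x ++ sec L (!x) := by
      intro x
      rw [sec_append, hpT, Bool.xor_true]
    have hsum := sum_len_sec L
    have hlenM : ∀ x, (sec (L ++ L) x).length + L.count D = 2 * nA L := by
      intro x
      rw [hsecM, List.length_append]
      cases x <;> simp <;> omega
    apply ord_sq
    by_cases hD : D ∈ L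
    · have hcnt : 1 ≤ L.count D := List.count_pos_iff.mpr hD
      refine ord_decomp hpM (IH _ ?_) (IH _ ?_) <;>
        · have hl0 := hlenM false
          have hl1 := hlenM true
          have hr0 := rk_le (sec (L ++ L) false)
          have hr1 := rk_le (sec (L ++ L) true)
          unfold mu
          omega
    · by_cases hC : C ∈ L
      · have hrkL : rk L = 2 := by simp [rk, hD, hC]
        have hmem : ∀ x, D ∈ sec (L ++ L) x := by
          intro x
          rw [hsecM]
          rcases mem_D_sec L hC with h | h <;> cases x <;> simp [h]
        refine ord_decomp hpM (IH _ ?_) (IH _ ?_) <;>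
          · have hl0 := hlenM false
            have hl1 := hlenM true
            have hr0 := rk_of_memD (hmem false)
            have hr1 := rk_of_memD (hmem true)
            unfold mu
            omega
      · by_cases hB : B ∈ L
        · have hrkL : rk L = 3 := by simp [rk, hD, hC, hB]
          have hmem : ∀ x, C ∈ sec (L ++ L) x := by
            intro x
            rw [hsecM]
            rcases mem_C_sec L hB with h | h <;> cases x <;> simp [h]
          refine ord_decomp hpM (IH _ ?_) (IH _ ?_) <;>
            · have hl0 := hlenM false
              have hl1 := hlenM true
              have hr0 := rk_le_two_of_memC (hmem false)
              have hr1 := rk_le_two_of_memC (hmem true)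
              unfold mu
              omega
        · have hnA0 : nA L = 0 := by
            apply List.countP_eq_zero.mpr
            intro X hX
            cases X
            · simp [isA]
            · exact absurd hX hB
            · exact absurd hX hC
            · exact absurd hX hD
          have hsecnil : ∀ x, sec (L ++ L) x = [] := by
            intro x
            have h1 := len_sec_le L x
            have h2 := len_sec_le L (!x)
            apply List.length_eq_zero_iff.mp
            rw [hsecM, List.length_append]
            omega
          refine ord_decomp hpM ?_ ?_ <;> rw [hsecnil] <;> exact ord_nil

theorem ord_all : ∀ L : List L4, Ord L := by
  suffices h : ∀ (N : ℕ) (L : List L4), mu L ≤ N → Ord L by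
    intro L; exact h (mu L) L le_rfl
  intro N
  induction N with
  | zero =>
      intro L hμ
      have hlen : L.length = 0 := by unfold mu at hμ; omega
      rw [List.length_eq_zero_iff.mp hlen]
      exact ord_nil
  | succ N IHN =>
      intro L hμ
      have IH : ∀ L', mu L' < mu L → Ord L' := fun L' h => IHN L' (by omega)
      by_cases hch : List.Chain' R L
      · cases L with
        | nil => exact ord_nil
        | cons X M =>
            cases hA : isA X
            · cases M with
              | nil => exact ord_single X
              | cons Y M' =>
                  obtain ⟨hRY, hch'⟩ := List.isChain_cons_cons.mp hch
                  have hY : isA Y = true := by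
                    cases hisA : isA Y
                    · exact absurd (hA.trans hisA.symm) hRY
                    · rfl
                  apply ord_rot (M := Y :: M')
                  have hμW : mu ((Y :: M') ++ [X]) = mu (X :: Y :: M') := by
                    unfold mu
                    have hlen : ((Y :: M') ++ [X]).length = (X :: Y :: M').length := by
                      simp
                    have hrk : rk ((Y :: M') ++ [X]) = rk (X :: Y :: M') := by
                      apply rk_congr
                      intro Z
                      simp [List.mem_append, List.mem_cons]
                      tauto
                    omega
                  by_cases hchW : List.Chain' R ((Y :: M') ++ [X])
                  · refine goodCase _ (fun L' h => IH L' (by omega)) hchW ?_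
                    show hp (Y :: (M' ++ [X])) = 0
                    simp [hp, hY]
                  · obtain ⟨L'', hlen, hev⟩ := exists_shorter _ hchW
                    refine ord_congr (fun w => (hev w).symm) (IH L'' ?_)
                    have h1 := rk_le L''
                    have h2 : ((Y :: M') ++ [X]).length = (X :: Y :: M').length := by simp
                    unfold mu at *
                    omega
            · exact goodCase _ IH hch (by simp [hp, hA])
      · obtain ⟨L'', hlen, hev⟩ := exists_shorter L hch
        refine ord_congr (fun w => (hev w).symm) (IH L'' ?_)
        have h1 := rk_le L''
        have h2 := rk_le L
        unfold mu
        omega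

end GrigAux

namespace GrigAux
open L4

/-- Interpretation of a letter as a permutation. -/
def gp : L4 → Equiv.Perm (List Bool)
  | A => grigPermA
  | B => grigPermB
  | C => grigPermC
  | D => grigPermD

theorem gp_apply (X : L4) (w : List Bool) : gp X w = f X w := by
  cases X <;> rfl

theorem gp_mul_self (X : L4) : gp X * gp X = 1 := by
  apply Equiv.ext
  intro w
  show gp X (gp X w) = w
  rw [gp_apply, gp_apply]
  exact f_invol X w

theorem gp_inv (X : L4) : (gp X)⁻¹ = gp X :=
  inv_eq_of_mul_eq_one_right (gp_mul_self X)

/-- The permutation given by a word (leftmost letter acting last). -/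
def permOf (L : List L4) : Equiv.Perm (List Bool) := (L.map gp).prod

theorem permOf_nil : permOf [] = 1 := rfl

theorem permOf_cons (X : L4) (L : List L4) : permOf (X :: L) = gp X * permOf L := by
  simp [permOf]

theorem permOf_append (L M : List L4) : permOf (L ++ M) = permOf L * permOf M := by
  simp [permOf]

theorem permOf_single (X : L4) : permOf [X] = gp X := by
  simp [permOf]

theorem permOf_inv : ∀ L : List L4, (permOf L)⁻¹ = permOf L.reverse
  | [] => by simp [permOf_nil]
  | X :: L => by
      rw [permOf_cons, mul_inv_rev, gp_inv, permOf_inv L, List.reverse_cons,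
        permOf_append, permOf_single]

theorem permOf_apply : ∀ (L : List L4) (w : List Bool), permOf L w = eval L.reverse w
  | [], w => rfl
  | X :: L, w => by
      rw [permOf_cons]
      show gp X (permOf L w) = eval (X :: L).reverse w
      rw [gp_apply, permOf_apply L, List.reverse_cons, eval_append]
      rfl

/-- The subgroup of permutations expressible as a word in the generators. -/
def T : Subgroup (Equiv.Perm (List Bool)) where
  carrier := {g | ∃ L : List L4, g = permOf L}
  one_mem' := ⟨[], rfl⟩
  mul_mem' := by
    rintro g h ⟨Lg, rfl⟩ ⟨Lh, rfl⟩
    exact ⟨Lg ++ Lh, (permOf_append Lg Lh).symm⟩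
  inv_mem' := by
    rintro g ⟨L, rfl⟩
    exact ⟨L.reverse, permOf_inv L⟩

theorem grig_le_T : grigorchukGroup ≤ T := by
  rw [grigorchukGroup, Subgroup.closure_le]
  rintro g (rfl | rfl | rfl | rfl)
  · exact ⟨[A], (permOf_single A).symm⟩
  · exact ⟨[B], (permOf_single B).symm⟩
  · exact ⟨[C], (permOf_single C).symm⟩
  · exact ⟨[D], (permOf_single D).symm⟩

theorem grig_torsion (g : Equiv.Perm (List Bool)) (hg : g ∈ grigorchukGroup) :
    ∃ n : ℕ, 0 < n ∧ g ^ n = 1 := by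
  obtain ⟨L, rfl⟩ := grig_le_T hg
  obtain ⟨n, hn, hw⟩ := ord_all L.reverse
  refine ⟨n, hn, ?_⟩
  apply Equiv.ext
  intro w
  have hco : ⇑(permOf L) = eval L.reverse := funext (permOf_apply L)
  show (permOf L ^ n) w = w
  rw [Equiv.Perm.coe_pow, hco]
  exact hw w

end GrigAux

/-- Grigorchuk's group contains no nonabelian free subgroup: there are no elements
`x, y` such that the induced homomorphism from the free group on two generators
is injective. -/
theorem grigorchukGroup_no_nonabelian_free_subgroup :
    ¬ ∃ x y : grigorchukGroup,
        Function.Injective (FreeGroup.lift ![x, y] : FreeGroup (Fin 2) →* grigorchukGroup) := by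
  rintro ⟨x, y, hinj⟩
  obtain ⟨n, hn, hxn⟩ := GrigAux.grig_torsion x.1 x.2
  have hxn' : x ^ n = 1 := by
    apply Subtype.ext
    rw [SubmonoidClass.coe_pow]
    exact hxn
  have hx : (FreeGroup.lift ![x, y]) (FreeGroup.of (0 : Fin 2)) = x := by
    simp [FreeGroup.lift_apply_of]
  have h1 : (FreeGroup.lift ![x, y]) ((FreeGroup.of (0 : Fin 2)) ^ n) = 1 := by
    rw [map_pow, hx, hxn']
  have h2 : (FreeGroup.of (0 : Fin 2)) ^ n = 1 := by
    apply hinj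
    rw [h1, map_one]
  have h3 : (Multiplicative.ofAdd (1 : ℤ)) ^ n = 1 := by
    have := congrArg (FreeGroup.lift (fun _ : Fin 2 => Multiplicative.ofAdd (1 : ℤ))) h2
    rwa [map_pow, FreeGroup.lift_apply_of, MonoidHom.map_one] at this
  have h4 : (n : ℤ) = 0 := by
    have h5 : Multiplicative.toAdd ((Multiplicative.ofAdd (1 : ℤ)) ^ n) = (0 : ℤ) := by
      rw [h3]; rfl
    simpa using h5
  omega
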